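/- arXiv:1601.04011 — 5 statements merged into one kernel-verified Lean document; each statement's English description precedes it below -/
import Mathlib

section
/- For every sample S whose empirical covariance matrix Ĉ = (1/n)·Σ_{i=1}^n x_i x_iᵀ is invertible, and for any choice of the minimizers ŵ and ŵ_1,…,ŵ_n, the average stability satisfies Δ(S,W) ≤ (2ρ²/(α·n))·κ(Ĉ), where κ(Ĉ) = tr(Ĉ)/λ_min(Ĉ) is the ratio of the trace of Ĉ to its smallest eigenvalue. -/
open Matrix Set

/-! Fix `i` and put `v = ŵᵢ - ŵ`. Along the segment from `ŵ` to `ŵᵢ` the empirical risk `F` is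
minimised at `ŵ` and has second derivative at least `α ∑ⱼ (v ⬝ᵥ xⱼ)² ≥ α n λ_min |v|²`, so
`F(ŵᵢ) - F(ŵ) ≥ α n λ_min |v|² / 2`. Since `ŵᵢ` minimises `F - ℓᵢ`, this difference is at most
`Tᵢ = ℓᵢ(ŵᵢ) - ℓᵢ(ŵ)`, while by (A1) and Cauchy–Schwarz `Tᵢ ≤ ρ |v| |xᵢ|`. Eliminating `|v|` gives
`Tᵢ ≤ 2ρ² |xᵢ|² / (α n λ_min)`, and averaging over `i` turns `(1/n) ∑ |xᵢ|²` into `tr Ĉ`. -/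

theorem add_half_le_of_isMinOn_Icc {G G' G'' : ℝ → ℝ} {m : ℝ}
    (hG : ∀ t, HasDerivAt G (G' t) t) (hG' : ∀ t, HasDerivAt G' (G'' t) t)
    (hmin : IsMinOn G (Icc 0 1) 0) (hm : ∀ t ∈ Icc (0 : ℝ) 1, m ≤ G'' t) :
    G 0 + m / 2 ≤ G 1 := by
  have hG'0 : 0 ≤ G' 0 := by
    simpa using hmin.localize.hasFDerivWithinAt_nonneg (hG 0).hasDerivWithinAt.hasFDerivWithinAt
      (sub_mem_posTangentConeAt_of_segment_subset (segment_eq_Icc zero_le_one).subset)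
  have hG'_ge : ∀ t ∈ Icc (0 : ℝ) 1, m * t ≤ G' t :=
    image_le_of_deriv_right_le_deriv_boundary (f' := fun _ => m)
      (continuous_const_mul m).continuousOn
      (fun t _ => ((hasDerivAt_id t).const_mul m).hasDerivWithinAt.congr_deriv (mul_one m))
      (by simpa using hG'0) (fun t _ => (hG' t).continuousAt.continuousWithinAt)
      (fun t _ => (hG' t).hasDerivWithinAt) (fun t ht => hm t (Ico_subset_Icc_self ht))
  have := image_le_of_deriv_right_le_deriv_boundary (f := fun t => G 0 + m * t ^ 2 / 2)
    (f' := fun t => m * t) (by fun_prop)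
    (fun t _ => ((((hasDerivAt_pow 2 t).const_mul m).div_const 2).const_add (G 0)).hasDerivWithinAt
      |>.congr_deriv (by push_cast; ring))
    (by simp) (fun t _ => (hG t).continuousAt.continuousWithinAt)
    (fun t _ => (hG t).hasDerivWithinAt) (fun t ht => hG'_ge t (Ico_subset_Icc_self ht))
    (right_mem_Icc.2 zero_le_one)
  simpa using this

theorem hasDerivAt_comp_add_mul {f : ℝ → ℝ} {a c t : ℝ} (hf : DifferentiableAt ℝ f (a + t * c)) :
    HasDerivAt (fun s => f (a + s * c)) (deriv f (a + t * c) * c) t :=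
  hf.hasDerivAt.comp t (((hasDerivAt_id t).mul_const c).const_add a |>.congr_deriv (one_mul c))

theorem dotProduct_sq_le_dotProduct_self_mul_dotProduct_self {m R : Type*} [Fintype m]
    [CommRing R] [LinearOrder R] [IsStrictOrderedRing R] (v w : m → R) :
    (v ⬝ᵥ w) ^ 2 ≤ (v ⬝ᵥ v) * (w ⬝ᵥ w) := by
  simpa only [dotProduct, sq] using Finset.sum_mul_sq_le_sq_mul_sq Finset.univ v w

theorem Finset.sum_sub_sum_le_of_isMinOn_erase {ι E : Type*} [Fintype ι] [DecidableEq ι]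
    {f : ι → E → ℝ} {s : Set E} {i : ι} {u w : E} (hu : u ∈ s)
    (hw : IsMinOn (fun v => ∑ j ∈ Finset.univ.erase i, f j v) s w) :
    ∑ j, f j w - ∑ j, f j u ≤ f i w - f i u := by
  rw [← Finset.add_sum_erase _ _ (Finset.mem_univ i),
    ← Finset.add_sum_erase _ _ (Finset.mem_univ i)]
  linarith [isMinOn_iff.1 hw u hu]

section GLM

variable {ι m : Type*} [Fintype ι] [Fintype m] {ℓ : ι → ℝ → ℝ} {x : ι → m → ℝ}
  {W : Set (m → ℝ)} {α ρ : ℝ} {u w : m → ℝ}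

theorem abs_sub_le_mul_abs_dotProduct_sub {f : ℝ → ℝ} {a : m → ℝ} (hW : Convex ℝ W)
    (hf : ∀ z, DifferentiableAt ℝ f z) (hf' : ∀ w ∈ W, |deriv f (w ⬝ᵥ a)| ≤ ρ)
    (hu : u ∈ W) (hw : w ∈ W) :
    |f (w ⬝ᵥ a) - f (u ⬝ᵥ a)| ≤ ρ * |(w - u) ⬝ᵥ a| := by
  have hconv : Convex ℝ ((· ⬝ᵥ a) '' W) :=
    hW.is_linear_image ⟨fun v v' => add_dotProduct v v' a, fun c v => smul_dotProduct c v a⟩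
  rw [sub_dotProduct]
  exact hconv.norm_image_sub_le_of_norm_deriv_le (fun z _ => hf z)
    (by rintro _ ⟨w', hw', rfl⟩; exact hf' w' hw') (mem_image_of_mem _ hu) (mem_image_of_mem _ hw)

theorem sum_add_half_mul_sum_sq_le_of_isMinOn (hW : Convex ℝ W)
    (hℓ : ∀ j z, DifferentiableAt ℝ (ℓ j) z) (hℓ' : ∀ j z, DifferentiableAt ℝ (deriv (ℓ j)) z)
    (hℓ'' : ∀ j, ∀ w ∈ W, α ≤ deriv (deriv (ℓ j)) (w ⬝ᵥ x j))
    (hu : u ∈ W) (hw : w ∈ W) (hmin : IsMinOn (fun w => ∑ j, ℓ j (w ⬝ᵥ x j)) W u) :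
    ∑ j, ℓ j (u ⬝ᵥ x j) + α / 2 * ∑ j, ((w - u) ⬝ᵥ x j) ^ 2 ≤ ∑ j, ℓ j (w ⬝ᵥ x j) := by
  set c := fun j => (w - u) ⬝ᵥ x j
  have hline : ∀ (t : ℝ) j, (u + t • (w - u)) ⬝ᵥ x j = u ⬝ᵥ x j + t * c j := fun t j => by
    simp only [c, add_dotProduct, smul_dotProduct, smul_eq_mul]
  have hmem : ∀ t ∈ Icc (0 : ℝ) 1, u + t • (w - u) ∈ W := fun t ht => hW.add_smul_sub_mem hu hw ht
  have hG : ∀ t, HasDerivAt (fun s => ∑ j, ℓ j (u ⬝ᵥ x j + s * c j))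
      (∑ j, deriv (ℓ j) (u ⬝ᵥ x j + t * c j) * c j) t := fun t =>
    HasDerivAt.fun_sum fun j _ => hasDerivAt_comp_add_mul (hℓ j _)
  have hG' : ∀ t, HasDerivAt (fun s => ∑ j, deriv (ℓ j) (u ⬝ᵥ x j + s * c j) * c j)
      (∑ j, deriv (deriv (ℓ j)) (u ⬝ᵥ x j + t * c j) * c j * c j) t := fun t =>
    HasDerivAt.fun_sum fun j _ => (hasDerivAt_comp_add_mul (hℓ' j _)).mul_const (c j)
  have hmin' : IsMinOn (fun s => ∑ j, ℓ j (u ⬝ᵥ x j + s * c j)) (Icc 0 1) 0 :=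
    isMinOn_iff.2 fun t ht => by
      simpa only [hline, zero_mul, add_zero] using isMinOn_iff.1 hmin _ (hmem t ht)
  have hcurv : ∀ t ∈ Icc (0 : ℝ) 1,
      α * ∑ j, c j ^ 2 ≤ ∑ j, deriv (deriv (ℓ j)) (u ⬝ᵥ x j + t * c j) * c j * c j := by
    intro t ht
    rw [Finset.mul_sum]
    refine Finset.sum_le_sum fun j _ => ?_
    have := hℓ'' j _ (hmem t ht)
    rw [hline] at this
    nlinarith [sq_nonneg (c j)]
  have := add_half_le_of_isMinOn_Icc hG hG' hmin' hcurv
  have h1 : ∀ j, u ⬝ᵥ x j + 1 * c j = w ⬝ᵥ x j := fun j => by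
    simp only [c, one_mul, sub_dotProduct]; ring
  simp only [zero_mul, add_zero, h1] at this
  linarith

theorem loss_sub_le_of_isMinOn_erase [DecidableEq ι] (hW : Convex ℝ W) (hα : 0 < α)
    (hℓ : ∀ j z, DifferentiableAt ℝ (ℓ j) z) (hℓ' : ∀ j z, DifferentiableAt ℝ (deriv (ℓ j)) z)
    (hℓ'' : ∀ j, ∀ w ∈ W, α ≤ deriv (deriv (ℓ j)) (w ⬝ᵥ x j))
    {i : ι} (hlip : ∀ w ∈ W, |deriv (ℓ i) (w ⬝ᵥ x i)| ≤ ρ)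
    {μ : ℝ} (hμ : 0 < μ) (hcov : ∀ v, μ * (v ⬝ᵥ v) ≤ ∑ j, (v ⬝ᵥ x j) ^ 2)
    (hu : u ∈ W) (hmin : IsMinOn (fun w => ∑ j, ℓ j (w ⬝ᵥ x j)) W u)
    (hw : w ∈ W) (hmin_i : IsMinOn (fun w => ∑ j ∈ Finset.univ.erase i, ℓ j (w ⬝ᵥ x j)) W w) :
    ℓ i (w ⬝ᵥ x i) - ℓ i (u ⬝ᵥ x i) ≤ 2 * ρ ^ 2 * (x i ⬝ᵥ x i) / (α * μ) := by
  set T := ℓ i (w ⬝ᵥ x i) - ℓ i (u ⬝ᵥ x i)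
  set v := w - u
  have hgrowth : α * μ * (v ⬝ᵥ v) ≤ 2 * T := by
    have hquad := sum_add_half_mul_sum_sq_le_of_isMinOn hW hℓ hℓ' hℓ'' hu hw hmin
    have hloo := Finset.sum_sub_sum_le_of_isMinOn_erase (f := fun j w => ℓ j (w ⬝ᵥ x j)) hu hmin_i
    nlinarith [hcov v]
  have hlipT : T ≤ ρ * |v ⬝ᵥ x i| :=
    (le_abs_self T).trans (abs_sub_le_mul_abs_dotProduct_sub hW (hℓ i) hlip hu hw)
  have hcs := dotProduct_sq_le_dotProduct_self_mul_dotProduct_self v (x i)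
  have hB : 0 ≤ x i ⬝ᵥ x i := by simpa using dotProduct_self_star_nonneg (x i)
  rw [le_div_iff₀ (mul_pos hα hμ)]
  rcases le_or_gt T 0 with hT | hT
  · nlinarith [mul_pos hα hμ, mul_nonneg (sq_nonneg ρ) hB]
  · have hT2 : T * (α * μ) * T ≤ 2 * ρ ^ 2 * (x i ⬝ᵥ x i) * T := calc
      T * (α * μ) * T = T ^ 2 * (α * μ) := by ring
      _ ≤ (ρ * |v ⬝ᵥ x i|) ^ 2 * (α * μ) := by gcongr
      _ = ρ ^ 2 * (v ⬝ᵥ x i) ^ 2 * (α * μ) := by rw [mul_pow, sq_abs]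
      _ ≤ ρ ^ 2 * ((v ⬝ᵥ v) * (x i ⬝ᵥ x i)) * (α * μ) := by gcongr
      _ = ρ ^ 2 * (x i ⬝ᵥ x i) * (α * μ * (v ⬝ᵥ v)) := by ring
      _ ≤ 2 * ρ ^ 2 * (x i ⬝ᵥ x i) * T := by nlinarith [mul_nonneg (sq_nonneg ρ) hB]
    exact le_of_mul_le_mul_right hT2 hT

end GLM

open MatrixOrder in
theorem Matrix.IsHermitian.sInf_spectrum_mul_dotProduct_le {n : Type*} [Fintype n]
    [DecidableEq n] {A : Matrix n n ℝ} (hA : A.IsHermitian) (v : n → ℝ) :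
    sInf (spectrum ℝ A) * (v ⬝ᵥ v) ≤ v ⬝ᵥ (A *ᵥ v) := by
  have hpsd : (A - algebraMap ℝ _ (sInf (spectrum ℝ A))).PosSemidef :=
    algebraMap_le_of_le_spectrum (fun _ h => csInf_le finite_real_spectrum.bddBelow h) hA
  have := hpsd.dotProduct_mulVec_nonneg v
  simp only [Algebra.algebraMap_eq_smul_one, sub_mulVec, smul_mulVec, one_mulVec, star_trivial,
    dotProduct_sub, dotProduct_smul, smul_eq_mul] at this
  linarith

theorem Matrix.PosSemidef.sInf_spectrum_pos {n : Type*} [Fintype n] [DecidableEq n] [Nonempty n]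
    {A : Matrix n n ℝ} (hA : A.PosSemidef) (hAu : IsUnit A) : 0 < sInf (spectrum ℝ A) := by
  have hrange := hA.1.spectrum_real_eq_range_eigenvalues
  have hmem : sInf (spectrum ℝ A) ∈ spectrum ℝ A :=
    (hrange ▸ range_nonempty _).csInf_mem finite_real_spectrum
  rw [hrange] at hmem ⊢
  obtain ⟨i, hi⟩ := hmem
  exact hi ▸ (hA.posDef_iff_isUnit.2 hAu).eigenvalues_pos i

section EmpiricalCovariance

variable {m : Type*} [Fintype m] {n : ℕ}

noncomputable def empiricalCov (x : Fin n → m → ℝ) : Matrix m m ℝ :=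
  (1 / n : ℝ) • ∑ i, vecMulVec (x i) (x i)

theorem empiricalCov_posSemidef (x : Fin n → m → ℝ) : (empiricalCov x).PosSemidef :=
  (posSemidef_sum _ fun i _ => by simpa using posSemidef_vecMulVec_self_star (x i)).smul
    (by positivity)

theorem trace_empiricalCov (x : Fin n → m → ℝ) :
    (empiricalCov x).trace = (1 / n : ℝ) * ∑ i, x i ⬝ᵥ x i := by
  simp [empiricalCov, trace_sum, trace_vecMulVec]

theorem dotProduct_empiricalCov_mulVec (x : Fin n → m → ℝ) (v : m → ℝ) :
    v ⬝ᵥ (empiricalCov x *ᵥ v) = (1 / n : ℝ) * ∑ i, (v ⬝ᵥ x i) ^ 2 := by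
  simp [empiricalCov, smul_mulVec, sum_mulVec, vecMulVec_mulVec, dotProduct_sum, sq,
    dotProduct_comm]

theorem natCast_mul_sInf_spectrum_empiricalCov_le [DecidableEq m] (x : Fin n → m → ℝ) (v : m → ℝ) :
    n * sInf (spectrum ℝ (empiricalCov x)) * (v ⬝ᵥ v) ≤ ∑ i, (v ⬝ᵥ x i) ^ 2 := by
  obtain rfl | hn := Nat.eq_zero_or_pos n
  · simp
  calc n * sInf (spectrum ℝ (empiricalCov x)) * (v ⬝ᵥ v)
      = n * (sInf (spectrum ℝ (empiricalCov x)) * (v ⬝ᵥ v)) := mul_assoc _ _ _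
    _ ≤ n * (v ⬝ᵥ (empiricalCov x *ᵥ v)) := by
      gcongr; exact (empiricalCov_posSemidef x).1.sInf_spectrum_mul_dotProduct_le v
    _ = ∑ i, (v ⬝ᵥ x i) ^ 2 := by
      rw [dotProduct_empiricalCov_mulVec]; field_simp

end EmpiricalCovariance

theorem average_stability_le_condition_number_general
    (d n : ℕ) (ρ α : ℝ) (hα : 0 < α)
    (X W : Set (Fin d → ℝ))
    (hWconv : Convex ℝ W)
    {Y : Type*} (φ : Y → ℝ → ℝ)
    (hφdiff : ∀ y, ∀ z : ℝ, DifferentiableAt ℝ (φ y) z)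
    (hφdiff2 : ∀ y, ∀ z : ℝ, DifferentiableAt ℝ (deriv (φ y)) z)
    (hA1 : ∀ y, ∀ w ∈ W, ∀ x ∈ X, |deriv (φ y) (w ⬝ᵥ x)| ≤ ρ)
    (hA2 : ∀ y, ∀ w ∈ W, ∀ x ∈ X, α ≤ deriv (deriv (φ y)) (w ⬝ᵥ x))
    -- the sample
    (x : Fin n → Fin d → ℝ) (hx : ∀ i, x i ∈ X) (y : Fin n → Y)
    -- the empirical covariance matrix, assumed invertible
    (C : Matrix (Fin d) (Fin d) ℝ)
    (hC : C = (1 / n : ℝ) • ∑ i : Fin n, vecMulVec (x i) (x i))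
    (hCinv : IsUnit C)
    -- the empirical risk minimizer
    (what : Fin d → ℝ) (hwhatW : what ∈ W)
    (hwhat : IsMinOn (fun w => (1 / n : ℝ) * ∑ i : Fin n, φ (y i) (w ⬝ᵥ x i)) W what)
    -- the leave-one-out minimizers
    (whati : Fin n → Fin d → ℝ) (hwhatiW : ∀ i, whati i ∈ W)
    (hwhati : ∀ i, IsMinOn
      (fun w => ∑ j ∈ Finset.univ.erase i, φ (y j) (w ⬝ᵥ x j)) W (whati i)) :
    (1 / n : ℝ) * ∑ i : Fin n, (φ (y i) (whati i ⬝ᵥ x i) - φ (y i) (what ⬝ᵥ x i))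
      ≤ (2 * ρ ^ 2 / (α * n)) * (C.trace / sInf (spectrum ℝ C)) := by
  obtain rfl | hd := Nat.eq_zero_or_pos d
  · -- the spectrum of a `0 × 0` matrix is empty and `sInf ∅ = 0`; both sides vanish
    simp [Matrix.trace]
  have : Nonempty (Fin d) := ⟨⟨0, hd⟩⟩
  obtain rfl : C = empiricalCov x := hC
  have hlam := (empiricalCov_posSemidef x).sInf_spectrum_pos hCinv
  have hmin : IsMinOn (fun w => ∑ j, φ (y j) (w ⬝ᵥ x j)) W what := isMinOn_iff.2 fun w hw => by
    obtain rfl | hn := Nat.eq_zero_or_pos n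
    · simp
    · exact le_of_mul_le_mul_left (isMinOn_iff.1 hwhat w hw) (by positivity)
  calc (1 / n : ℝ) * ∑ i, (φ (y i) (whati i ⬝ᵥ x i) - φ (y i) (what ⬝ᵥ x i))
      ≤ (1 / n : ℝ) * ∑ i, 2 * ρ ^ 2 * (x i ⬝ᵥ x i) /
          (α * (n * sInf (spectrum ℝ (empiricalCov x)))) := by
        gcongr with i
        exact loss_sub_le_of_isMinOn_erase hWconv hα (fun j => hφdiff (y j))
          (fun j => hφdiff2 (y j)) (fun j w hw => hA2 (y j) w hw (x j) (hx j))
          (fun w hw => hA1 (y i) w hw (x i) (hx i)) (mul_pos (Nat.cast_pos.2 i.pos) hlam)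
          (natCast_mul_sInf_spectrum_empiricalCov_le x) hwhatW hmin (hwhatiW i) (hwhati i)
    _ = _ := by
        rw [trace_empiricalCov, Finset.mul_sum, Finset.mul_sum, Finset.sum_div, Finset.mul_sum]
        exact Finset.sum_congr rfl fun i _ => by ring

/-- In the GLM setting, for every sample `S = ((x_i, y_i))_{i=1}^n` whose
empirical covariance matrix `Ĉ = (1/n)·∑ x_i x_iᵀ` is invertible, and any choice of the ERM
`ŵ` and leave-one-out minimizers `ŵ_1, …, ŵ_n` over `W`, the average stability satisfies
`Δ(S,W) = (1/n)·∑_i (ℓ̂_i(ŵ_i) − ℓ̂_i(ŵ)) ≤ (2ρ²/(α·n))·κ(Ĉ)`, where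
`κ(Ĉ) = tr(Ĉ)/λ_min(Ĉ)` and `λ_min(Ĉ) = sInf (spectrum ℝ Ĉ)` is the smallest eigenvalue. -/
theorem average_stability_le_condition_number
    (d n : ℕ) (ρ α : ℝ) (hρ : 0 < ρ) (hα : 0 < α)
    (X W : Set (Fin d → ℝ))
    (hXcomp : IsCompact X) (hXconv : Convex ℝ X)
    (hWcomp : IsCompact W) (hWconv : Convex ℝ W)
    {Y : Type*} (φ : Y → ℝ → ℝ)
    (hφdiff : ∀ y, ∀ z : ℝ, DifferentiableAt ℝ (φ y) z)
    (hφdiff2 : ∀ y, ∀ z : ℝ, DifferentiableAt ℝ (deriv (φ y)) z)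
    (hA1 : ∀ y, ∀ w ∈ W, ∀ x ∈ X, |deriv (φ y) (w ⬝ᵥ x)| ≤ ρ)
    (hA2 : ∀ y, ∀ w ∈ W, ∀ x ∈ X, α ≤ deriv (deriv (φ y)) (w ⬝ᵥ x))
    -- the sample
    (x : Fin n → Fin d → ℝ) (hx : ∀ i, x i ∈ X) (y : Fin n → Y)
    -- the empirical covariance matrix, assumed invertible
    (C : Matrix (Fin d) (Fin d) ℝ)
    (hC : C = (1 / n : ℝ) • ∑ i : Fin n, vecMulVec (x i) (x i))
    (hCinv : IsUnit C)
    -- the empirical risk minimizer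
    (what : Fin d → ℝ) (hwhatW : what ∈ W)
    (hwhat : IsMinOn (fun w => (1 / n : ℝ) * ∑ i : Fin n, φ (y i) (w ⬝ᵥ x i)) W what)
    -- the leave-one-out minimizers
    (whati : Fin n → Fin d → ℝ) (hwhatiW : ∀ i, whati i ∈ W)
    (hwhati : ∀ i, IsMinOn
      (fun w => ∑ j ∈ Finset.univ.erase i, φ (y j) (w ⬝ᵥ x j)) W (whati i)) :
    (1 / n : ℝ) * ∑ i : Fin n, (φ (y i) (whati i ⬝ᵥ x i) - φ (y i) (what ⬝ᵥ x i))
      ≤ (2 * ρ ^ 2 / (α * n)) * (C.trace / sInf (spectrum ℝ C)) :=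
  average_stability_le_condition_number_general d n ρ α hα X W hWconv φ hφdiff hφdiff2 hA1 hA2 x hx
    y C hC hCinv what hwhatW hwhat whati hwhatiW hwhati
end

section
/- Let W ⊆ ℝ^d be a convex set, let f_1,…,f_n : ℝ^d → ℝ be convex functions such that f_i is ρ̂_i-Lipschitz on W for each i, and suppose F = (1/n)·Σ_{j=1}^n f_j is μ̂-strongly convex on W with μ̂ > 0. Let ŵ ∈ W minimize F over W, and for each i let ŵ_i ∈ W minimize Σ_{j≠i} f_j over W. Then for every i ∈ {1,…,n}: f_i(ŵ_i) − f_i(ŵ) ≤ 2ρ̂_i²/(n·μ̂). -/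
/-!
Strong convexity of the empirical risk `F` around its minimiser `ŵ` gives
`n μ̂ / 2 · ‖ŵᵢ - ŵ‖² ≤ n (F ŵᵢ - F ŵ)`, and since `ŵᵢ` minimises the leave-one-out sum, the right
side is at most `D := fᵢ ŵᵢ - fᵢ ŵ`. The Lipschitz bound gives `D ≤ ρ̂ᵢ ‖ŵᵢ - ŵ‖`, and eliminating
`‖ŵᵢ - ŵ‖` between the two inequalities yields `D ≤ 2 ρ̂ᵢ² / (n μ̂)`.
-/

open Filter Topology

section UniformConvex

variable {E : Type*} [NormedAddCommGroup E] [NormedSpace ℝ E] {s : Set E} {φ : ℝ → ℝ}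
  {f : E → ℝ} {x y : E}

lemma UniformConvexOn.le_sub_of_isMinOn (hf : UniformConvexOn s φ f) (hmin : IsMinOn f s x)
    (hx : x ∈ s) (hy : y ∈ s) : φ ‖y - x‖ ≤ f y - f x := by
  have segment_bound : ∀ t ∈ Set.Ioo (0 : ℝ) 1, (1 - t) * φ ‖y - x‖ ≤ f y - f x := by
    rintro t ⟨ht0, ht1⟩
    have hseg := hf.2 hy hx ht0.le (sub_nonneg.2 ht1.le) (add_sub_cancel t 1)
    have hmin_seg : f x ≤ f (t • y + (1 - t) • x) :=
      hmin (hf.1 hy hx ht0.le (sub_nonneg.2 ht1.le) (add_sub_cancel t 1))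
    rw [smul_eq_mul, smul_eq_mul] at hseg
    have : t * ((1 - t) * φ ‖y - x‖) ≤ t * (f y - f x) := by nlinarith
    exact le_of_mul_le_mul_left this ht0
  have hlim : Tendsto (fun t : ℝ => (1 - t) * φ ‖y - x‖) (𝓝[>] 0) (𝓝 (φ ‖y - x‖)) := by
    refine tendsto_nhdsWithin_of_tendsto_nhds ?_
    simpa using ((continuous_const.sub continuous_id).mul continuous_const).tendsto
      (f := fun t : ℝ => (1 - t) * φ ‖y - x‖) 0
  exact le_of_tendsto hlim <| mem_of_superset (Ioo_mem_nhdsGT one_pos) segment_bound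

end UniformConvex

lemma le_sq_div_of_mul_sq_le_of_le_mul {c r ρ D : ℝ} (hc : 0 < c) (hlow : c * r ^ 2 ≤ D)
    (hup : D ≤ ρ * r) : D ≤ ρ ^ 2 / c := by
  rw [le_div_iff₀ hc]
  -- `ρ² ≥ 2cρr - c²r² = cρr + c(ρr - cr²) ≥ cρr ≥ cD`
  nlinarith [sq_nonneg (ρ - c * r), mul_le_mul_of_nonneg_left (hlow.trans hup) hc.le]

lemma Finset.sum_sub_sum_le_of_sum_erase_le {ι α : Type*} [Fintype ι] [DecidableEq ι]
    (f : ι → α → ℝ) {i : ι} {a b : α}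
    (h : ∑ j ∈ Finset.univ.erase i, f j a ≤ ∑ j ∈ Finset.univ.erase i, f j b) :
    ∑ j, f j a - ∑ j, f j b ≤ f i a - f i b := by
  rw [← Finset.add_sum_erase _ _ (Finset.mem_univ i),
    ← Finset.add_sum_erase _ _ (Finset.mem_univ i)]
  linarith

theorem uniform_leave_one_out_stability_of_strongly_convex_general
    (d n : ℕ) (W : Set (EuclideanSpace ℝ (Fin d)))
    (f : Fin n → EuclideanSpace ℝ (Fin d) → ℝ)
    (ρhat : Fin n → ℝ)
    (hLip : ∀ i, ∀ u ∈ W, ∀ v ∈ W, |f i u - f i v| ≤ ρhat i * ‖u - v‖)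
    (μhat : ℝ) (hμ : 0 < μhat)
    (hSC : ConvexOn ℝ W
      (fun w => (1 / n : ℝ) * ∑ j : Fin n, f j w - μhat / 2 * ‖w‖ ^ 2))
    (what : EuclideanSpace ℝ (Fin d)) (hwhatW : what ∈ W)
    (hwhat : IsMinOn (fun w => (1 / n : ℝ) * ∑ j : Fin n, f j w) W what)
    (whati : Fin n → EuclideanSpace ℝ (Fin d)) (hwhatiW : ∀ i, whati i ∈ W)
    (hwhati : ∀ i, IsMinOn (fun w => ∑ j ∈ Finset.univ.erase i, f j w) W (whati i)) :
    ∀ i : Fin n, f i (whati i) - f i what ≤ 2 * (ρhat i) ^ 2 / (n * μhat) := by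
  intro i
  have hn : (0 : ℝ) < n := Nat.cast_pos.2 i.pos
  have hgrowth : μhat / 2 * ‖whati i - what‖ ^ 2 ≤
      (1 / n : ℝ) * ∑ j, f j (whati i) - (1 / n : ℝ) * ∑ j, f j what :=
    (strongConvexOn_iff_convex.2 hSC).le_sub_of_isMinOn hwhat hwhatW (hwhatiW i)
  have hlow : n * μhat / 2 * ‖whati i - what‖ ^ 2 ≤ f i (whati i) - f i what := by
    calc n * μhat / 2 * ‖whati i - what‖ ^ 2 = n * (μhat / 2 * ‖whati i - what‖ ^ 2) := by ring
      _ ≤ n * ((1 / n : ℝ) * ∑ j, f j (whati i) - (1 / n : ℝ) * ∑ j, f j what) := by gcongr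
      _ = ∑ j, f j (whati i) - ∑ j, f j what := by field_simp
      _ ≤ f i (whati i) - f i what :=
        Finset.sum_sub_sum_le_of_sum_erase_le f (hwhati i hwhatW)
  have hup := (abs_le.1 (hLip i _ (hwhatiW i) _ hwhatW)).2
  calc f i (whati i) - f i what ≤ ρhat i ^ 2 / (n * μhat / 2) :=
        le_sq_div_of_mul_sq_le_of_le_mul (by positivity) hlow hup
    _ = 2 * ρhat i ^ 2 / (n * μhat) := by field_simp

/-- Let `W ⊆ ℝ^d` be convex, let `f_1, …, f_n` be convex functions with
`f_i` being `ρ̂_i`-Lipschitz on `W`, and suppose `F = (1/n)·∑ f_j` is `μ̂`-strongly convex on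
`W` (i.e. `F - (μ̂/2)·‖·‖²` is convex on `W`) with `μ̂ > 0`. If `ŵ ∈ W` minimizes `F` over `W`
and `ŵ_i ∈ W` minimizes `∑_{j≠i} f_j` over `W`, then for every `i`,
`f_i(ŵ_i) − f_i(ŵ) ≤ 2ρ̂_i²/(n·μ̂)`. -/
theorem uniform_leave_one_out_stability_of_strongly_convex
    (d n : ℕ) (W : Set (EuclideanSpace ℝ (Fin d))) (hWconv : Convex ℝ W)
    (f : Fin n → EuclideanSpace ℝ (Fin d) → ℝ)
    (hfconv : ∀ i, ConvexOn ℝ Set.univ (f i))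
    (ρhat : Fin n → ℝ)
    (hLip : ∀ i, ∀ u ∈ W, ∀ v ∈ W, |f i u - f i v| ≤ ρhat i * ‖u - v‖)
    (μhat : ℝ) (hμ : 0 < μhat)
    (hSC : ConvexOn ℝ W
      (fun w => (1 / n : ℝ) * ∑ j : Fin n, f j w - μhat / 2 * ‖w‖ ^ 2))
    (what : EuclideanSpace ℝ (Fin d)) (hwhatW : what ∈ W)
    (hwhat : IsMinOn (fun w => (1 / n : ℝ) * ∑ j : Fin n, f j w) W what)
    (whati : Fin n → EuclideanSpace ℝ (Fin d)) (hwhatiW : ∀ i, whati i ∈ W)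
    (hwhati : ∀ i, IsMinOn (fun w => ∑ j ∈ Finset.univ.erase i, f j w) W (whati i)) :
    ∀ i : Fin n, f i (whati i) - f i what ≤ 2 * (ρhat i) ^ 2 / (n * μhat) :=
  uniform_leave_one_out_stability_of_strongly_convex_general d n W f ρhat hLip μhat hμ hSC what
    hwhatW hwhat whati hwhatiW hwhati
end

section
/- Let Ĉ be a symmetric positive semidefinite d×d matrix and δ > 0, and set P = Ĉ + δ·(I − ĈĈ†), where Ĉ† is the Moore–Penrose pseudoinverse of Ĉ. Then P is symmetric positive definite, P^{−1/2}ĈP^{−1/2} equals the orthogonal projection onto the column space of Ĉ, and consequently κ(P^{−1/2}ĈP^{−1/2}) = tr(P^{−1/2}ĈP^{−1/2})/λ_min(P^{−1/2}ĈP^{−1/2}) = rank(Ĉ), where λ_min denotes the smallest nonzero eigenvalue. -/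
open Matrix

/-- The condition number of a positive semidefinite matrix: the ratio of its trace to its
smallest *nonzero* eigenvalue. -/
noncomputable def condNumberNZ {d : ℕ} (A : Matrix (Fin d) (Fin d) ℝ) : ℝ :=
  A.trace / sInf {μ ∈ spectrum ℝ A | μ ≠ 0}

/-- The positive semidefinite square root of a positive semidefinite matrix
(Mathlib's former `Matrix.PosSemidef.sqrt`, removed upstream; restated with its old definition). -/
noncomputable def Matrix.PosSemidef.sqrt {n 𝕜 : Type*} [Fintype n] [RCLike 𝕜] [DecidableEq n]
    [PartialOrder 𝕜] [StarOrderedRing 𝕜]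
    {A : Matrix n n 𝕜} (hA : A.PosSemidef) : Matrix n n 𝕜 :=
  hA.1.eigenvectorUnitary.1 * diagonal ((↑) ∘ (√·) ∘ hA.1.eigenvalues) *
  (star hA.1.eigenvectorUnitary : Matrix n n 𝕜)

/-!
Write `Q = ĈĈ†`, the orthogonal projection onto the range of `Ĉ`, so that `QĈ = Ĉ = ĈQ`.
`P` is positive definite because a vector killed by both `Ĉ` and `1 - Q` lies in
`range Q ∩ ker Ĉ = 0`. Next, `√Ĉ Q = √Ĉ`, so `B = √Ĉ + √δ (1 - Q)` is a positive semidefinite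
matrix with `B² = P`; by uniqueness of positive square roots `B = P^{1/2}`. Since `BQB = Ĉ`,
conjugating by `B⁻¹` gives `P^{-1/2} Ĉ P^{-1/2} = Q`. The spectrum of a projection lies in
`{0, 1}`, so its trace is its rank and its smallest nonzero eigenvalue is `1`; finally
`rank Q = rank Ĉ`.
-/

open scoped MatrixOrder ComplexOrder

namespace Matrix

variable {m n 𝕜 : Type*} [Fintype m] [Fintype n] [RCLike 𝕜]

section PseudoInverse

variable {C : Matrix m n 𝕜} {Cdag : Matrix n m 𝕜}

lemma isStarProjection_mul_pinv (hMP1 : C * Cdag * C = C) (hMP3 : (C * Cdag)ᴴ = C * Cdag) :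
    IsStarProjection (C * Cdag) where
  isIdempotentElem := by rw [IsIdempotentElem, ← Matrix.mul_assoc, hMP1]
  isSelfAdjoint := hMP3

lemma rank_mul_pinv (hMP1 : C * Cdag * C = C) : (C * Cdag).rank = C.rank := by
  refine le_antisymm (rank_mul_le_left C Cdag) ?_
  conv_lhs => rw [← hMP1]
  exact rank_mul_le_left (C * Cdag) C

lemma mul_pinv_mulVec_eq_zero {C Cdag : Matrix n n 𝕜} (hC : C.IsHermitian)
    (hMP3 : (C * Cdag)ᴴ = C * Cdag) {x : n → 𝕜} (hx : C *ᵥ x = 0) : (C * Cdag) *ᵥ x = 0 := by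
  rw [← hMP3, conjTranspose_mul, hC.eq, ← mulVec_mulVec, hx, mulVec_zero]

end PseudoInverse

lemma posDef_add_of_mulVec_eq_zero {A B : Matrix n n 𝕜} (hA : A.PosSemidef) (hB : B.PosSemidef)
    (h : ∀ x, A *ᵥ x = 0 ∧ B *ᵥ x = 0 → x = 0) : (A + B).PosDef := by
  refine posDef_iff_dotProduct_mulVec.2 ⟨(hA.add hB).1, fun x hx => ?_⟩
  rw [add_mulVec, dotProduct_add]
  refine lt_of_le_of_ne (add_nonneg (hA.dotProduct_mulVec_nonneg x)
    (hB.dotProduct_mulVec_nonneg x)) fun hsum => hx (h x ?_)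
  obtain ⟨hAx, hBx⟩ := (add_eq_zero_iff_of_nonneg (hA.dotProduct_mulVec_nonneg x)
    (hB.dotProduct_mulVec_nonneg x)).1 hsum.symm
  exact ⟨(hA.dotProduct_mulVec_zero_iff x).1 hAx, (hB.dotProduct_mulVec_zero_iff x).1 hBx⟩

variable [DecidableEq n]

lemma PosSemidef.sqrt_eq_cfcSqrt {A : Matrix n n ℝ} (hA : A.PosSemidef) :
    hA.sqrt = CFC.sqrt A := by
  rw [CFC.sqrt_eq_real_sqrt A hA.nonneg, cfcₙ_eq_cfc, hA.1.cfc_eq, IsHermitian.cfc,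
    Unitary.conjStarAlgAut_apply]
  rfl

section StarProjection

variable {Q : Matrix n n 𝕜}

lemma trace_eq_rank_of_isStarProjection (hQ : IsStarProjection Q) : Q.trace = Q.rank := by
  have hH : Q.IsHermitian := hQ.isSelfAdjoint
  have h01 (i : n) : hH.eigenvalues i = 0 ∨ hH.eigenvalues i = 1 := by
    simpa using hQ.isIdempotentElem.spectrum_subset ℝ (hH.eigenvalues_mem_spectrum_real i)
  have hsum : ∑ i, hH.eigenvalues i = Fintype.card {i // hH.eigenvalues i ≠ 0} := by
    rw [Fintype.card_subtype, Finset.natCast_card_filter]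
    exact Finset.sum_congr rfl fun i _ => by rcases h01 i with h | h <;> simp [h]
  rw [hH.trace_eq_sum_eigenvalues, hH.rank_eq_card_non_zero_eigs, ← RCLike.ofReal_natCast,
    ← hsum, RCLike.ofReal_sum]

lemma one_mem_spectrum_of_isIdempotentElem (hQ : IsIdempotentElem Q) (hQ0 : Q ≠ 0) :
    (1 : ℝ) ∈ spectrum ℝ Q := by
  rw [spectrum.mem_iff, map_one]
  exact fun hu => hQ0 (hu.mul_right_eq_zero.1 hQ.one_sub_mul_self)

end StarProjection

section Preconditioner

variable {C Q : Matrix n n 𝕜}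

lemma posDef_add_smul_one_sub (hC : C.PosSemidef) (hQ : IsStarProjection Q)
    (hker : ∀ x, C *ᵥ x = 0 → Q *ᵥ x = 0) {δ : ℝ} (hδ : 0 < δ) : (C + δ • (1 - Q)).PosDef := by
  refine posDef_add_of_mulVec_eq_zero hC (hQ.one_sub_nonneg.posSemidef.smul hδ.le) ?_
  rintro x ⟨hCx, hδx⟩
  rw [smul_mulVec, smul_eq_zero_iff_right hδ.ne', sub_mulVec, one_mulVec, sub_eq_zero] at hδx
  rw [hδx, hker x hCx]

lemma cfcSqrt_mul_eq_self (hC : C.PosSemidef) (hQ : Q.IsHermitian) (hQC : Q * C = C) :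
    CFC.sqrt C * Q = CFC.sqrt C := by
  set R := CFC.sqrt C
  have hR : R.IsHermitian := (CFC.sqrt_nonneg C).posSemidef.1
  have hRR : R * R = C := CFC.sqrt_mul_sqrt_self C hC.nonneg
  have hCQ : C * Q = C := by simpa [hQ.eq, hC.1.eq] using congrArg conjTranspose hQC
  have hzero : (R - R * Q)ᴴ * (R - R * Q) = 0 := by
    rw [conjTranspose_sub, conjTranspose_mul, hR.eq, hQ.eq]
    calc (R - Q * R) * (R - R * Q) = R * R - (R * R) * Q - Q * (R * R) + Q * (R * R) * Q := by
          noncomm_ring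
      _ = 0 := by rw [hRR, hCQ, hQC, hCQ]; abel
  exact (sub_eq_zero.1 (conjTranspose_mul_self_eq_zero.1 hzero)).symm

lemma cfcSqrt_add_smul_one_sub (hC : C.PosSemidef) (hQ : IsStarProjection Q) (hQC : Q * C = C)
    {δ : ℝ} (hδ : 0 ≤ δ) : CFC.sqrt (C + δ • (1 - Q)) = CFC.sqrt C + √δ • (1 - Q) := by
  have hRQ : CFC.sqrt C * (1 - Q) = 0 := by
    rw [mul_sub, mul_one, cfcSqrt_mul_eq_self hC hQ.isSelfAdjoint hQC, sub_self]
  have hQR : (1 - Q) * CFC.sqrt C = 0 := by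
    simpa [(CFC.sqrt_nonneg C).posSemidef.1.eq, show Qᴴ = Q from hQ.isSelfAdjoint] using
      congrArg conjTranspose hRQ
  refine CFC.sqrt_unique ?_ (add_nonneg (CFC.sqrt_nonneg C)
    (smul_nonneg (Real.sqrt_nonneg δ) hQ.one_sub_nonneg))
  rw [add_mul, mul_add, mul_add, CFC.sqrt_mul_sqrt_self C hC.nonneg, mul_smul_comm, hRQ,
    smul_mul_assoc, hQR, smul_mul_smul, Real.mul_self_sqrt hδ, hQ.one_sub.isIdempotentElem.eq]
  simp

lemma add_smul_one_sub_mul_mul_self {R : Matrix n n 𝕜} (hRQ : R * Q = R) (hQ : IsIdempotentElem Q)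
    (s : ℝ) : (R + s • (1 - Q)) * Q * (R + s • (1 - Q)) = R * R := by
  have hBQ : (R + s • (1 - Q)) * Q = R := by
    rw [add_mul, hRQ, smul_mul_assoc, hQ.one_sub_mul_self, smul_zero, add_zero]
  rw [hBQ, mul_add, mul_smul_comm, mul_sub, mul_one, hRQ, sub_self, smul_zero, add_zero]

lemma inv_cfcSqrt_mul_mul_inv_cfcSqrt (hC : C.PosSemidef) (hQ : IsStarProjection Q)
    (hQC : Q * C = C) {δ : ℝ} (hδ : 0 ≤ δ) (hP : IsUnit (C + δ • (1 - Q))) :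
    (CFC.sqrt (C + δ • (1 - Q)))⁻¹ * C * (CFC.sqrt (C + δ • (1 - Q)))⁻¹ = Q := by
  set B := CFC.sqrt (C + δ • (1 - Q)) with hBdef
  have hB : IsUnit B.det := by
    rw [← isUnit_iff_isUnit_det, hBdef,
      CFC.isUnit_sqrt_iff _ (add_nonneg hC.nonneg (smul_nonneg hδ hQ.one_sub_nonneg))]
    exact hP
  have hBQB : B * Q * B = C := by
    rw [hBdef, cfcSqrt_add_smul_one_sub hC hQ hQC hδ, add_smul_one_sub_mul_mul_self
      (cfcSqrt_mul_eq_self hC hQ.isSelfAdjoint hQC) hQ.isIdempotentElem,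
      CFC.sqrt_mul_sqrt_self C hC.nonneg]
  rw [← hBQB]
  simp only [Matrix.mul_assoc, nonsing_inv_mul_cancel_left _ _ hB, mul_nonsing_inv _ hB,
    Matrix.mul_one]

end Preconditioner

end Matrix

open Matrix

lemma condNumberNZ_eq_rank_of_isStarProjection {d : ℕ} {Q : Matrix (Fin d) (Fin d) ℝ}
    (hQ : IsStarProjection Q) : condNumberNZ Q = Q.rank := by
  rcases eq_or_ne Q 0 with rfl | hQ0
  · simp [condNumberNZ]
  have hspec : {μ ∈ spectrum ℝ Q | μ ≠ 0} = {1} := by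
    refine Set.eq_singleton_iff_unique_mem.2
      ⟨⟨one_mem_spectrum_of_isIdempotentElem hQ.isIdempotentElem hQ0, one_ne_zero⟩, ?_⟩
    rintro μ ⟨hμ, hμ0⟩
    exact (hQ.isIdempotentElem.spectrum_subset ℝ hμ).resolve_left hμ0
  rw [condNumberNZ, hspec, csInf_singleton, div_one, trace_eq_rank_of_isStarProjection hQ]

theorem preconditioning_rank_deficient_covariance_general
    (d : ℕ) (C : Matrix (Fin d) (Fin d) ℝ) (hC : C.PosSemidef)
    (δ : ℝ) (hδ : 0 < δ)
    (Cdag : Matrix (Fin d) (Fin d) ℝ)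
    (hMP1 : C * Cdag * C = C)
    (hMP3 : (C * Cdag)ᴴ = C * Cdag)
    (P : Matrix (Fin d) (Fin d) ℝ)
    (hPdef : P = C + δ • ((1 : Matrix (Fin d) (Fin d) ℝ) - C * Cdag)) :
    P.PosDef
    ∧ ∀ (hP : P.PosDef),
        (hP.posSemidef.sqrt)⁻¹ * C * (hP.posSemidef.sqrt)⁻¹ = C * Cdag
        ∧ condNumberNZ ((hP.posSemidef.sqrt)⁻¹ * C * (hP.posSemidef.sqrt)⁻¹) = C.rank := by
  have hQ := isStarProjection_mul_pinv hMP1 hMP3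
  refine ⟨hPdef ▸ posDef_add_smul_one_sub hC hQ (fun _ => mul_pinv_mulVec_eq_zero hC.1 hMP3) hδ,
    fun hP => ?_⟩
  have hconj : (hP.posSemidef.sqrt)⁻¹ * C * (hP.posSemidef.sqrt)⁻¹ = C * Cdag := by
    rw [hP.posSemidef.sqrt_eq_cfcSqrt]
    subst hPdef
    exact inv_cfcSqrt_mul_mul_inv_cfcSqrt hC hQ hMP1 hδ.le hP.isUnit
  rw [hconj, condNumberNZ_eq_rank_of_isStarProjection hQ, rank_mul_pinv hMP1]
  exact ⟨rfl, rfl⟩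

/-- Let `Ĉ` be symmetric positive semidefinite, `δ > 0`, and
`P = Ĉ + δ·(I − ĈĈ†)`, where `Ĉ†` is the Moore–Penrose pseudoinverse of `Ĉ` (characterized
by the four Penrose conditions). Then `P` is symmetric positive definite,
`P^{-1/2}ĈP^{-1/2}` equals `ĈĈ†`, the orthogonal projection onto the column space of `Ĉ`,
and consequently `κ(P^{-1/2}ĈP^{-1/2}) = tr(·)/λ_min(·) = rank(Ĉ)`, where `λ_min` is the
smallest nonzero eigenvalue. -/
theorem preconditioning_rank_deficient_covariance
    (d : ℕ) (C : Matrix (Fin d) (Fin d) ℝ) (hC : C.PosSemidef)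
    (δ : ℝ) (hδ : 0 < δ)
    (Cdag : Matrix (Fin d) (Fin d) ℝ)
    (hMP1 : C * Cdag * C = C)
    (hMP2 : Cdag * C * Cdag = Cdag)
    (hMP3 : (C * Cdag)ᴴ = C * Cdag)
    (hMP4 : (Cdag * C)ᴴ = Cdag * C)
    (P : Matrix (Fin d) (Fin d) ℝ)
    (hPdef : P = C + δ • ((1 : Matrix (Fin d) (Fin d) ℝ) - C * Cdag)) :
    P.PosDef
    ∧ ∀ (hP : P.PosDef),
        (hP.posSemidef.sqrt)⁻¹ * C * (hP.posSemidef.sqrt)⁻¹ = C * Cdag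
        ∧ condNumberNZ ((hP.posSemidef.sqrt)⁻¹ * C * (hP.posSemidef.sqrt)⁻¹) = C.rank :=
  preconditioning_rank_deficient_covariance_general d C hC δ hδ Cdag hMP1 hMP3 P hPdef
end

section
/- For every sample S ∈ (X×Y)^n and any choice of the minimizers ŵ and ŵ_1,…,ŵ_n, the average stability satisfies the dimension-dependent bound Δ(S,W) ≤ 2ρ²·d/(α·n). (This follows by combining the preconditioning invariance of Δ with the condition-number stability bound applied after preconditioning by the empirical covariance Ĉ = (1/n)·Σ x_i x_iᵀ, for which the preconditioned condition number is rank(Ĉ) ≤ d.) -/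
/-!
Put `v = ŵᵢ - ŵ` and `u = (vᵀx_j)_j`. First-order optimality of `ŵ` for the full sum and of `ŵᵢ`
for the sum without `i`, combined with the strong monotonicity `α (b - a)² ≤ (φ' b - φ' a)(b - a)`
of each `φ'` along the margins, gives `α ‖u‖² ≤ ρ |uᵢ|`. Since `u` lies in the column space `K`
of the data matrix, `|uᵢ| ≤ ‖u‖ ‖P_K eᵢ‖`, so `α |uᵢ| ≤ ρ ‖P_K eᵢ‖²`. The losses are
`ρ`-Lipschitz in the margin, and the leverage scores `‖P_K eᵢ‖²` sum to `rank K ≤ d`; hence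
`n Δ ≤ ρ² rank / α`.
-/

open Matrix Set

open scoped RealInnerProductSpace

section Projection

variable {ι E : Type*} [NormedAddCommGroup E] [InnerProductSpace ℝ E]

theorem Submodule.abs_inner_le_norm_mul_norm_starProjection (K : Submodule ℝ E)
    [K.HasOrthogonalProjection] {u : E} (hu : u ∈ K) (v : E) :
    |⟪u, v⟫| ≤ ‖u‖ * ‖K.starProjection v‖ := by
  calc |⟪u, v⟫| = |⟪u, K.starProjection v⟫| := by
        rw [← K.inner_starProjection_left_eq_right, K.starProjection_eq_self_iff.mpr hu]
    _ ≤ ‖u‖ * ‖K.starProjection v‖ := abs_real_inner_le_norm _ _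

theorem Submodule.mul_abs_inner_le_mul_norm_starProjection_sq (K : Submodule ℝ E)
    [K.HasOrthogonalProjection] {u : E} (hu : u ∈ K) (v : E) {α ρ : ℝ} (hα : 0 < α)
    (hρ : 0 ≤ ρ) (h : α * ‖u‖ ^ 2 ≤ ρ * |⟪u, v⟫|) :
    α * |⟪u, v⟫| ≤ ρ * ‖K.starProjection v‖ ^ 2 := by
  set s := |⟪u, v⟫|
  set p := ‖K.starProjection v‖
  have hs : s ^ 2 ≤ ‖u‖ ^ 2 * p ^ 2 := by
    rw [← mul_pow]
    gcongr
    exact K.abs_inner_le_norm_mul_norm_starProjection hu v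
  have hs_nonneg : 0 ≤ s := abs_nonneg _
  rcases hs_nonneg.eq_or_lt with hs0 | hs0
  · rw [← hs0, mul_zero]
    positivity
  · refine le_of_mul_le_mul_right ?_ hs0
    calc α * s * s = α * s ^ 2 := by ring
      _ ≤ α * ‖u‖ ^ 2 * p ^ 2 := by rw [mul_assoc]; gcongr
      _ ≤ ρ * s * p ^ 2 := by gcongr
      _ = ρ * p ^ 2 * s := by ring

theorem OrthonormalBasis.sum_norm_starProjection_sq [Fintype ι] (e : OrthonormalBasis ι ℝ E)
    (K : Submodule ℝ E) [FiniteDimensional ℝ K] :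
    ∑ i, ‖K.starProjection (e i)‖ ^ 2 = Module.finrank ℝ K := by
  let b := stdOrthonormalBasis ℝ K
  calc ∑ i, ‖K.starProjection (e i)‖ ^ 2
      = ∑ i, ∑ k, ⟪(b k : E), e i⟫ ^ 2 := by
        refine Finset.sum_congr rfl fun i _ => ?_
        rw [K.starProjection_apply, Submodule.norm_coe, ← b.sum_sq_inner_right]
        simp
    _ = ∑ k, ‖(b k : E)‖ ^ 2 := by
        rw [Finset.sum_comm]
        simp_rw [e.sum_sq_inner_left]
    _ = Module.finrank ℝ K := by simp_rw [Submodule.norm_coe, b.orthonormal.1]; simp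

end Projection

theorem IsMinOn.hasDerivAt_nonneg {g : ℝ → ℝ} {g' a b : ℝ} (h : IsMinOn g (Icc a b) a)
    (hab : a < b) (hg : HasDerivAt g g' a) : 0 ≤ g' := by
  have hy : b - a ∈ posTangentConeAt (Icc a b) a :=
    sub_mem_posTangentConeAt_of_segment_subset (segment_eq_Icc hab.le).subset
  have := h.localize.hasFDerivWithinAt_nonneg hg.hasFDerivAt.hasFDerivWithinAt hy
  simp only [ContinuousLinearMap.toSpanSingleton_apply, smul_eq_mul] at this
  exact nonneg_of_mul_nonneg_right this (sub_pos.2 hab)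

theorem Convex.mul_sq_le_sub_mul_sub_of_le_deriv {D : Set ℝ} (hD : Convex ℝ D) {g : ℝ → ℝ}
    (hg : Differentiable ℝ g) {α : ℝ} (hα : ∀ z ∈ D, α ≤ deriv g z) {a b : ℝ}
    (ha : a ∈ D) (hb : b ∈ D) :
    α * (b - a) ^ 2 ≤ (g b - g a) * (b - a) := by
  have key : ∀ a ∈ D, ∀ b ∈ D, a ≤ b → α * (b - a) ^ 2 ≤ (g b - g a) * (b - a) := by
    intro a ha b hb hab
    rw [sq, ← mul_assoc]
    exact mul_le_mul_of_nonneg_right (hD.mul_sub_le_image_sub_of_le_deriv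
      hg.continuous.continuousOn hg.differentiableOn (fun z hz => hα z (interior_subset hz))
      a ha b hb hab) (sub_nonneg.2 hab)
  rcases le_total a b with hab | hba
  · exact key a ha b hb hab
  · calc α * (b - a) ^ 2 = α * (a - b) ^ 2 := by ring
      _ ≤ (g a - g b) * (a - b) := key b hb a ha hba
      _ = (g b - g a) * (b - a) := by ring

section GLM

variable {ι κ : Type*} [Fintype κ] {W : Set (κ → ℝ)} {ρ α : ℝ}

theorem Convex.image_dotProduct (hW : Convex ℝ W) (v : κ → ℝ) : Convex ℝ ((· ⬝ᵥ v) '' W) :=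
  hW.is_linear_image ⟨fun a b => add_dotProduct a b v, fun c a => smul_dotProduct c a v⟩

theorem Convex.comp_dotProduct_sub_le (hW : Convex ℝ W) {g : ℝ → ℝ} (hg : Differentiable ℝ g)
    {v : κ → ℝ} (hbound : ∀ w ∈ W, |deriv g (w ⬝ᵥ v)| ≤ ρ) {w w' : κ → ℝ} (hw : w ∈ W)
    (hw' : w' ∈ W) : g (w' ⬝ᵥ v) - g (w ⬝ᵥ v) ≤ ρ * |(w' - w) ⬝ᵥ v| := by
  have := (hW.image_dotProduct v).norm_image_sub_le_of_norm_deriv_le (fun z _ => hg z)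
    (by rintro _ ⟨u, hu, rfl⟩; exact hbound u hu) (mem_image_of_mem _ hw) (mem_image_of_mem _ hw')
  rw [sub_dotProduct]
  exact (le_abs_self _).trans this

variable {f : ι → ℝ → ℝ} {x : ι → κ → ℝ}

theorem IsMinOn.sum_deriv_mul_dotProduct_nonneg {s : Finset ι} {w₀ w : κ → ℝ}
    (hmin : IsMinOn (fun w => ∑ j ∈ s, f j (w ⬝ᵥ x j)) W w₀) (hW : Convex ℝ W)
    (hf : ∀ j, Differentiable ℝ (f j)) (hw₀ : w₀ ∈ W) (hw : w ∈ W) :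
    0 ≤ ∑ j ∈ s, deriv (f j) (w₀ ⬝ᵥ x j) * ((w - w₀) ⬝ᵥ x j) := by
  have hline : ∀ (t : ℝ) j, (w₀ + t • (w - w₀)) ⬝ᵥ x j = w₀ ⬝ᵥ x j + t * ((w - w₀) ⬝ᵥ x j) :=
    fun t j => by rw [add_dotProduct, smul_dotProduct, smul_eq_mul]
  refine IsMinOn.hasDerivAt_nonneg (g := fun t => ∑ j ∈ s, f j ((w₀ + t • (w - w₀)) ⬝ᵥ x j))
    (b := 1) ?_ one_pos ?_
  · intro t ht
    simpa using hmin (hW.add_smul_sub_mem hw₀ hw ht)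
  · simp_rw [hline]
    refine HasDerivAt.fun_sum fun j _ => ?_
    simpa [Function.comp_def] using ((hf j) _).hasDerivAt.comp (0 : ℝ)
      (((hasDerivAt_id' (0 : ℝ)).mul_const ((w - w₀) ⬝ᵥ x j)).const_add (w₀ ⬝ᵥ x j))

theorem mul_sum_sq_dotProduct_sub_le_of_isMinOn [Fintype ι] [DecidableEq ι] (hW : Convex ℝ W)
    (hf : ∀ j, Differentiable ℝ (f j)) (hf' : ∀ j, Differentiable ℝ (deriv (f j)))
    (hA1 : ∀ j, ∀ w ∈ W, |deriv (f j) (w ⬝ᵥ x j)| ≤ ρ)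
    (hA2 : ∀ j, ∀ w ∈ W, α ≤ deriv (deriv (f j)) (w ⬝ᵥ x j))
    {w₀ w₁ : κ → ℝ} (hw₀ : w₀ ∈ W) (hw₁ : w₁ ∈ W) {i : ι}
    (hmin₀ : IsMinOn (fun w => ∑ j, f j (w ⬝ᵥ x j)) W w₀)
    (hmin₁ : IsMinOn (fun w => ∑ j ∈ Finset.univ.erase i, f j (w ⬝ᵥ x j)) W w₁) :
    α * ∑ j, ((w₁ - w₀) ⬝ᵥ x j) ^ 2 ≤ ρ * |(w₁ - w₀) ⬝ᵥ x i| := by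
  set m : ι → ℝ := fun j => (w₁ - w₀) ⬝ᵥ x j
  have hm : ∀ j, m j = w₁ ⬝ᵥ x j - w₀ ⬝ᵥ x j := fun j => sub_dotProduct _ _ _
  have hmono : ∀ j, α * m j ^ 2 ≤ (deriv (f j) (w₁ ⬝ᵥ x j) - deriv (f j) (w₀ ⬝ᵥ x j)) * m j :=
    fun j => by
      simpa only [hm] using (hW.image_dotProduct (x j)).mul_sq_le_sub_mul_sub_of_le_deriv (hf' j)
        (by rintro _ ⟨w, hw, rfl⟩; exact hA2 j w hw) (mem_image_of_mem _ hw₀)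
        (mem_image_of_mem _ hw₁)
  have hopt₀ : 0 ≤ ∑ j, deriv (f j) (w₀ ⬝ᵥ x j) * m j :=
    hmin₀.sum_deriv_mul_dotProduct_nonneg hW hf hw₀ hw₁
  have hopt₁ : ∑ j ∈ Finset.univ.erase i, deriv (f j) (w₁ ⬝ᵥ x j) * m j ≤ 0 := by
    have := hmin₁.sum_deriv_mul_dotProduct_nonneg hW hf hw₁ hw₀
    simp only [← neg_sub w₁ w₀, neg_dotProduct, mul_neg, Finset.sum_neg_distrib] at this
    linarith
  have hlast : deriv (f i) (w₁ ⬝ᵥ x i) * m i ≤ ρ * |m i| :=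
    (le_abs_self _).trans (by rw [abs_mul]; gcongr; exact hA1 i w₁ hw₁)
  calc α * ∑ j, m j ^ 2
      ≤ ∑ j, (deriv (f j) (w₁ ⬝ᵥ x j) - deriv (f j) (w₀ ⬝ᵥ x j)) * m j := by
        rw [Finset.mul_sum]; exact Finset.sum_le_sum fun j _ => hmono j
    _ = ∑ j ∈ Finset.univ.erase i, deriv (f j) (w₁ ⬝ᵥ x j) * m j
          + deriv (f i) (w₁ ⬝ᵥ x i) * m i - ∑ j, deriv (f j) (w₀ ⬝ᵥ x j) * m j := by
        rw [Finset.sum_erase_add _ _ (Finset.mem_univ i), ← Finset.sum_sub_distrib]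
        simp only [sub_mul]
    _ ≤ ρ * |m i| := by linarith

theorem sum_sub_le_sq_mul_rank_div_of_isMinOn [Fintype ι] [DecidableEq ι] (hρ : 0 ≤ ρ)
    (hα : 0 < α) (hW : Convex ℝ W)
    (hf : ∀ j, Differentiable ℝ (f j)) (hf' : ∀ j, Differentiable ℝ (deriv (f j)))
    (hA1 : ∀ j, ∀ w ∈ W, |deriv (f j) (w ⬝ᵥ x j)| ≤ ρ)
    (hA2 : ∀ j, ∀ w ∈ W, α ≤ deriv (deriv (f j)) (w ⬝ᵥ x j))
    {w₀ : κ → ℝ} (hw₀ : w₀ ∈ W) (hmin₀ : IsMinOn (fun w => ∑ j, f j (w ⬝ᵥ x j)) W w₀)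
    {w₁ : ι → κ → ℝ} (hw₁ : ∀ i, w₁ i ∈ W)
    (hmin₁ : ∀ i, IsMinOn (fun w => ∑ j ∈ Finset.univ.erase i, f j (w ⬝ᵥ x j)) W (w₁ i)) :
    ∑ i, (f i (w₁ i ⬝ᵥ x i) - f i (w₀ ⬝ᵥ x i)) ≤ ρ ^ 2 * (of x).rank / α := by
  let K : Submodule ℝ (EuclideanSpace ℝ ι) :=
    (LinearMap.range (of x).mulVecLin).map (WithLp.linearEquiv 2 ℝ (ι → ℝ)).symm.toLinearMap
  let e := EuclideanSpace.basisFun ι ℝ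
  have hK : Module.finrank ℝ K = (of x).rank := LinearEquiv.finrank_map_eq _ _
  have hmargin : ∀ i, α * |(w₁ i - w₀) ⬝ᵥ x i| ≤ ρ * ‖K.starProjection (e i)‖ ^ 2 := by
    intro i
    let u : EuclideanSpace ℝ ι := WithLp.toLp 2 (of x *ᵥ (w₁ i - w₀))
    have hu : u ∈ K := ⟨_, LinearMap.mem_range_self _ _, rfl⟩
    have hcoord : ∀ j, u j = (w₁ i - w₀) ⬝ᵥ x j := fun j => dotProduct_comm _ _
    have hinner : ⟪u, e i⟫ = (w₁ i - w₀) ⬝ᵥ x i := by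
      simp only [e, EuclideanSpace.inner_basisFun_real, hcoord]
    have hnorm : ‖u‖ ^ 2 = ∑ j, ((w₁ i - w₀) ⬝ᵥ x j) ^ 2 := by
      simp [EuclideanSpace.norm_sq_eq, hcoord]
    rw [← hinner]
    refine K.mul_abs_inner_le_mul_norm_starProjection_sq hu _ hα hρ ?_
    rw [hinner, hnorm]
    exact mul_sum_sq_dotProduct_sub_le_of_isMinOn hW hf hf' hA1 hA2 hw₀ (hw₁ i) hmin₀ (hmin₁ i)
  calc ∑ i, (f i (w₁ i ⬝ᵥ x i) - f i (w₀ ⬝ᵥ x i))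
      ≤ ∑ i, ρ * |(w₁ i - w₀) ⬝ᵥ x i| :=
        Finset.sum_le_sum fun i _ => hW.comp_dotProduct_sub_le (hf i) (hA1 i) hw₀ (hw₁ i)
    _ ≤ ∑ i, ρ * (ρ * ‖K.starProjection (e i)‖ ^ 2 / α) := by
        gcongr with i
        rw [le_div_iff₀ hα, mul_comm]
        exact hmargin i
    _ = ρ ^ 2 * (∑ i, ‖K.starProjection (e i)‖ ^ 2) / α := by
        rw [Finset.mul_sum, Finset.sum_div]; congr 1; ext; ring
    _ = ρ ^ 2 * (of x).rank / α := by rw [e.sum_norm_starProjection_sq, hK]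

end GLM

theorem average_stability_le_dimension_bound_general
    (d n : ℕ) (ρ α : ℝ) (hρ : 0 < ρ) (hα : 0 < α)
    (X W : Set (Fin d → ℝ))
    (hWconv : Convex ℝ W)
    {Y : Type*} (φ : Y → ℝ → ℝ)
    (hφdiff : ∀ y, ∀ z : ℝ, DifferentiableAt ℝ (φ y) z)
    (hφdiff2 : ∀ y, ∀ z : ℝ, DifferentiableAt ℝ (deriv (φ y)) z)
    (hA1 : ∀ y, ∀ w ∈ W, ∀ x ∈ X, |deriv (φ y) (w ⬝ᵥ x)| ≤ ρ)
    (hA2 : ∀ y, ∀ w ∈ W, ∀ x ∈ X, α ≤ deriv (deriv (φ y)) (w ⬝ᵥ x))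
    -- the sample
    (x : Fin n → Fin d → ℝ) (hx : ∀ i, x i ∈ X) (y : Fin n → Y)
    -- the empirical risk minimizer
    (what : Fin d → ℝ) (hwhatW : what ∈ W)
    (hwhat : IsMinOn (fun w => (1 / n : ℝ) * ∑ i : Fin n, φ (y i) (w ⬝ᵥ x i)) W what)
    -- the leave-one-out minimizers
    (whati : Fin n → Fin d → ℝ) (hwhatiW : ∀ i, whati i ∈ W)
    (hwhati : ∀ i, IsMinOn
      (fun w => ∑ j ∈ Finset.univ.erase i, φ (y j) (w ⬝ᵥ x j)) W (whati i)) :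
    (1 / n : ℝ) * ∑ i : Fin n, (φ (y i) (whati i ⬝ᵥ x i) - φ (y i) (what ⬝ᵥ x i))
      ≤ 2 * ρ ^ 2 * d / (α * n) := by
  rcases Nat.eq_zero_or_pos n with rfl | hn
  · simp
  have hmin : IsMinOn (fun w => ∑ i, φ (y i) (w ⬝ᵥ x i)) W what :=
    isMinOn_iff.mpr fun w hw =>
      le_of_mul_le_mul_left (isMinOn_iff.mp hwhat w hw) (one_div_pos.mpr (Nat.cast_pos.mpr hn))
  have hsum := sum_sub_le_sq_mul_rank_div_of_isMinOn hρ.le hα hWconv (fun i => hφdiff (y i))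
    (fun i => hφdiff2 (y i)) (fun i w hw => hA1 _ w hw _ (hx i))
    (fun i w hw => hA2 _ w hw _ (hx i)) hwhatW hmin hwhatiW hwhati
  have hrank : ((of x).rank : ℝ) ≤ d := by exact_mod_cast rank_le_width (of x)
  calc (1 / n : ℝ) * ∑ i : Fin n, (φ (y i) (whati i ⬝ᵥ x i) - φ (y i) (what ⬝ᵥ x i))
      ≤ (1 / n) * (ρ ^ 2 * d / α) := by
        gcongr
        exact hsum.trans (by gcongr)
    _ ≤ 2 * ρ ^ 2 * d / (α * n) := by
        rw [one_div_mul_eq_div, div_div]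
        gcongr
        linarith [sq_nonneg ρ]

/-- In the GLM setting, for every sample `S ∈ (X×Y)^n` and any choice of
the ERM `ŵ` and leave-one-out minimizers `ŵ_1, …, ŵ_n` over `W`, the average stability
satisfies the dimension-dependent bound `Δ(S,W) ≤ 2ρ²·d/(α·n)`. -/
theorem average_stability_le_dimension_bound
    (d n : ℕ) (ρ α : ℝ) (hρ : 0 < ρ) (hα : 0 < α)
    (X W : Set (Fin d → ℝ))
    (hXcomp : IsCompact X) (hXconv : Convex ℝ X)
    (hWcomp : IsCompact W) (hWconv : Convex ℝ W)
    {Y : Type*} (φ : Y → ℝ → ℝ)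
    (hφdiff : ∀ y, ∀ z : ℝ, DifferentiableAt ℝ (φ y) z)
    (hφdiff2 : ∀ y, ∀ z : ℝ, DifferentiableAt ℝ (deriv (φ y)) z)
    (hA1 : ∀ y, ∀ w ∈ W, ∀ x ∈ X, |deriv (φ y) (w ⬝ᵥ x)| ≤ ρ)
    (hA2 : ∀ y, ∀ w ∈ W, ∀ x ∈ X, α ≤ deriv (deriv (φ y)) (w ⬝ᵥ x))
    -- the sample
    (x : Fin n → Fin d → ℝ) (hx : ∀ i, x i ∈ X) (y : Fin n → Y)
    -- the empirical risk minimizer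
    (what : Fin d → ℝ) (hwhatW : what ∈ W)
    (hwhat : IsMinOn (fun w => (1 / n : ℝ) * ∑ i : Fin n, φ (y i) (w ⬝ᵥ x i)) W what)
    -- the leave-one-out minimizers
    (whati : Fin n → Fin d → ℝ) (hwhatiW : ∀ i, whati i ∈ W)
    (hwhati : ∀ i, IsMinOn
      (fun w => ∑ j ∈ Finset.univ.erase i, φ (y j) (w ⬝ᵥ x j)) W (whati i)) :
    (1 / n : ℝ) * ∑ i : Fin n, (φ (y i) (whati i ⬝ᵥ x i) - φ (y i) (what ⬝ᵥ x i))
      ≤ 2 * ρ ^ 2 * d / (α * n) :=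
  average_stability_le_dimension_bound_general d n ρ α hρ hα X W hWconv φ hφdiff hφdiff2 hA1 hA2 x
    hx y what hwhatW hwhat whati hwhatiW hwhati
end

section
/- Linear regression stability bound without preconditioning: let X ⊆ ℝ^d be compact and convex, W = {w ∈ ℝ^d : |wᵀx| ≤ Y₀ for all x ∈ X}, and φ_y(z) = (1/2)·(z − y)² for y ∈ [−Y₀, Y₀]. For every sample S ∈ (X×[−Y₀,Y₀])^n whose empirical covariance Ĉ = (1/n)·Σ x_i x_iᵀ is invertible, and any choice of minimizers ŵ and ŵ_1,…,ŵ_n, the average stability satisfies Δ(S,W) ≤ (4·Y₀²/n)·κ(Ĉ), where κ(Ĉ) = tr(Ĉ)/λ_min(Ĉ). -/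
/-!
Fix `i` and put `u = ŵᵢ - ŵ`. The first-order optimality conditions of `ŵ` (in the direction
of `ŵᵢ`) and of `ŵᵢ` for the leave-one-out risk (in the direction of `ŵ`) add up to
`∑ⱼ (uᵀxⱼ)² ≤ (ŵᵢᵀxᵢ - yᵢ) · uᵀxᵢ =: Pᵢ`, and `Pᵢ` also bounds `ℓ̂ᵢ(ŵᵢ) - ℓ̂ᵢ(ŵ)` by
convexity of the square. The left side is at least `n λ_min(Ĉ) |u|²`, while Cauchy–Schwarz and
`|ŵᵢᵀxᵢ - yᵢ| ≤ 2Y₀` give `Pᵢ² ≤ 4Y₀² |u|² |xᵢ|²`; together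
`Pᵢ ≤ 4Y₀² |xᵢ|² / (n λ_min(Ĉ))`.
Averaging over `i` turns `∑ᵢ |xᵢ|² / n` into `tr Ĉ`.
-/

open Matrix Finset Filter Topology

section Spectrum

variable {m : Type*} [Fintype m] [DecidableEq m]

open scoped MatrixOrder in
theorem Matrix.IsHermitian.sInf_spectrum_mul_dotProduct_self_le {C : Matrix m m ℝ}
    (hC : C.IsHermitian) (u : m → ℝ) :
    sInf (spectrum ℝ C) * (u ⬝ᵥ u) ≤ u ⬝ᵥ (C *ᵥ u) := by
  have hle : algebraMap ℝ (Matrix m m ℝ) (sInf (spectrum ℝ C)) ≤ C :=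
    algebraMap_le_of_le_spectrum
      (fun _ hx ↦ csInf_le (finite_real_spectrum (A := C)).bddBelow hx) hC.isSelfAdjoint
  simpa [Algebra.algebraMap_eq_smul_one, sub_mulVec, smul_mulVec, one_mulVec, dotProduct_sub,
    dotProduct_smul] using (Matrix.le_iff.mp hle).dotProduct_mulVec_nonneg u

theorem Matrix.PosSemidef.sInf_spectrum_pos_s16 [Nonempty m] {C : Matrix m m ℝ}
    (hC : C.PosSemidef) (hunit : IsUnit C) : 0 < sInf (spectrum ℝ C) := by
  have hne : (spectrum ℝ C).Nonempty := by
    rw [hC.1.spectrum_real_eq_range_eigenvalues]; exact Set.range_nonempty _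
  have hmem := hne.csInf_mem (finite_real_spectrum (A := C))
  refine lt_of_le_of_ne ?_ fun h ↦ (spectrum.zero_mem_iff ℝ).mp (h ▸ hmem) hunit
  rw [hC.1.spectrum_real_eq_range_eigenvalues] at hmem ⊢
  obtain ⟨i, hi⟩ := hmem
  exact hi ▸ hC.eigenvalues_nonneg i

end Spectrum

section Gram

variable {m ι : Type*} [Fintype m] [Fintype ι]

theorem Matrix.dotProduct_smul_sum_vecMulVec_mulVec (c : ℝ) (x : ι → m → ℝ)
    (u : m → ℝ) :
    u ⬝ᵥ ((c • ∑ i, vecMulVec (x i) (x i)) *ᵥ u) = c * ∑ i, (u ⬝ᵥ x i) ^ 2 := by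
  simp [smul_mulVec, sum_mulVec, vecMulVec_mulVec, dotProduct_sum, dotProduct_smul, sq,
    dotProduct_comm]

theorem Matrix.posSemidef_smul_sum_vecMulVec {c : ℝ} (hc : 0 ≤ c) (x : ι → m → ℝ) :
    (c • ∑ i, vecMulVec (x i) (x i)).PosSemidef :=
  (posSemidef_sum _ fun i _ ↦ by simpa using posSemidef_vecMulVec_self_star (x i)).smul hc

theorem Matrix.trace_smul_sum_vecMulVec (c : ℝ) (x : ι → m → ℝ) :
    (c • ∑ i, vecMulVec (x i) (x i)).trace = c * ∑ i, x i ⬝ᵥ x i := by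
  simp [trace_sum, trace_vecMulVec]

end Gram

theorem convex_setOf_forall_abs_dotProduct_le {m : Type*} [Fintype m] (X : Set (m → ℝ))
    (r : ℝ) :
    Convex ℝ {w : m → ℝ | ∀ x ∈ X, |w ⬝ᵥ x| ≤ r} := by
  simp only [Set.ofPred_forall]
  refine convex_iInter₂ fun x _ ↦ ?_
  have hf : IsLinearMap ℝ (· ⬝ᵥ x : (m → ℝ) → ℝ) :=
    ⟨fun _ _ ↦ add_dotProduct _ _ _, fun _ _ ↦ smul_dotProduct _ _ _⟩
  simpa only [abs_le, Set.ofPred_and] using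
    (convex_halfSpace_ge hf (-r)).inter (convex_halfSpace_le hf r)

theorem nonneg_of_forall_mul_add_sq_mul_nonneg {B Q : ℝ}
    (h : ∀ θ : ℝ, 0 < θ → θ < 1 → 0 ≤ θ * B + θ ^ 2 * Q) : 0 ≤ B := by
  have hlim : Tendsto (fun θ : ℝ ↦ B + θ * Q) (𝓝[>] 0) (𝓝 B) := by
    have : Continuous (fun θ : ℝ ↦ B + θ * Q) := by fun_prop
    simpa using (this.tendsto 0).mono_left nhdsWithin_le_nhds
  refine ge_of_tendsto hlim ?_
  filter_upwards [Ioo_mem_nhdsGT one_pos] with θ ⟨hθ0, hθ1⟩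
  have hθ := h θ hθ0 hθ1
  exact nonneg_of_mul_nonneg_right (by linarith) hθ0

section LeastSquares

variable {m ι : Type*} [Fintype m] {S : Set (m → ℝ)} (x : ι → m → ℝ) (y : ι → ℝ)

theorem IsMinOn.sum_residual_mul_dotProduct_sub_nonneg (hS : Convex ℝ S) (s : Finset ι)
    {w v : m → ℝ} (hmin : IsMinOn (fun w ↦ ∑ j ∈ s, (w ⬝ᵥ x j - y j) ^ 2 / 2) S w)
    (hw : w ∈ S) (hv : v ∈ S) :
    0 ≤ ∑ j ∈ s, (w ⬝ᵥ x j - y j) * ((v - w) ⬝ᵥ x j) := by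
  refine nonneg_of_forall_mul_add_sq_mul_nonneg (Q := ∑ j ∈ s, ((v - w) ⬝ᵥ x j) ^ 2 / 2)
    fun θ hθ0 hθ1 ↦ ?_
  have hmem : w + θ • (v - w) ∈ S := hS.add_smul_sub_mem hw hv ⟨hθ0.le, hθ1.le⟩
  have hexpand : ∑ j ∈ s, ((w + θ • (v - w)) ⬝ᵥ x j - y j) ^ 2 / 2
      = ∑ j ∈ s, (w ⬝ᵥ x j - y j) ^ 2 / 2
        + (θ * ∑ j ∈ s, (w ⬝ᵥ x j - y j) * ((v - w) ⬝ᵥ x j)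
          + θ ^ 2 * ∑ j ∈ s, ((v - w) ⬝ᵥ x j) ^ 2 / 2) := by
    simp only [Finset.mul_sum, ← Finset.sum_add_distrib, add_dotProduct, smul_dotProduct,
      smul_eq_mul]
    exact Finset.sum_congr rfl fun j _ ↦ by ring
  have hle := isMinOn_iff.mp hmin _ hmem
  simp only [hexpand] at hle
  linarith

theorem sum_sq_dotProduct_sub_le_of_isMinOn [Fintype ι] [DecidableEq ι] (hS : Convex ℝ S)
    {w w' : m → ℝ} {i : ι}
    (hw : w ∈ S) (hmin : IsMinOn (fun w ↦ ∑ j, (w ⬝ᵥ x j - y j) ^ 2 / 2) S w)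
    (hw' : w' ∈ S)
    (hmin' : IsMinOn (fun w ↦ ∑ j ∈ univ.erase i, (w ⬝ᵥ x j - y j) ^ 2 / 2) S w') :
    ∑ j, ((w' - w) ⬝ᵥ x j) ^ 2 ≤ (w' ⬝ᵥ x i - y i) * ((w' - w) ⬝ᵥ x i) := by
  have hw_opt := hmin.sum_residual_mul_dotProduct_sub_nonneg x y hS univ hw hw'
  have hw'_opt := hmin'.sum_residual_mul_dotProduct_sub_nonneg x y hS _ hw' hw
  have hresid : ∀ j, w' ⬝ᵥ x j - y j = (w ⬝ᵥ x j - y j) + (w' - w) ⬝ᵥ x j := fun j ↦ by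
    rw [sub_dotProduct]; ring
  have hneg : ∀ j, (w - w') ⬝ᵥ x j = -((w' - w) ⬝ᵥ x j) := fun j ↦ by
    rw [← neg_dotProduct, neg_sub]
  calc ∑ j, ((w' - w) ⬝ᵥ x j) ^ 2
      ≤ ∑ j, (w ⬝ᵥ x j - y j) * ((w' - w) ⬝ᵥ x j) + ∑ j, ((w' - w) ⬝ᵥ x j) ^ 2 := by
        linarith
    _ = ∑ j, (w' ⬝ᵥ x j - y j) * ((w' - w) ⬝ᵥ x j) := by
      rw [← Finset.sum_add_distrib]
      exact Finset.sum_congr rfl fun j _ ↦ by rw [hresid]; ring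
    _ = ∑ j ∈ univ.erase i, (w' ⬝ᵥ x j - y j) * ((w' - w) ⬝ᵥ x j)
          + (w' ⬝ᵥ x i - y i) * ((w' - w) ⬝ᵥ x i) :=
      (Finset.sum_erase_add _ _ (mem_univ i)).symm
    _ ≤ (w' ⬝ᵥ x i - y i) * ((w' - w) ⬝ᵥ x i) := by
      simp only [hneg, mul_neg, Finset.sum_neg_distrib] at hw'_opt
      linarith

end LeastSquares

theorem mul_le_div_of_sq_le {a t A U X c : ℝ} (hc : 0 < c) (ha : a ^ 2 ≤ A)
    (ht : t ^ 2 ≤ U * X)    (hX : 0 ≤ X) (hcU : c * U ≤ a * t) : a * t ≤ A * X / c := by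
  rw [le_div_iff₀ hc]
  have hAX : 0 ≤ A * X := mul_nonneg ((sq_nonneg a).trans ha) hX
  rcases le_or_gt (a * t) 0 with hneg | hpos
  · nlinarith
  · have hsq : (a * t) ^ 2 ≤ A * (U * X) := by
      rw [mul_pow]; exact mul_le_mul ha ht (sq_nonneg t) ((sq_nonneg a).trans ha)
    nlinarith

theorem Matrix.dotProduct_sq_le_dotProduct_self_mul {m : Type*} [Fintype m] (u v : m → ℝ) :
    (u ⬝ᵥ v) ^ 2 ≤ (u ⬝ᵥ u) * (v ⬝ᵥ v) := by
  simpa only [dotProduct, sq] using Finset.sum_mul_sq_le_sq_mul_sq univ u v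

theorem leaveOneOut_loss_sub_le {m ι : Type*} [Fintype m] [Fintype ι] [DecidableEq ι]
    {S : Set (m → ℝ)} (hS : Convex ℝ S) (x : ι → m → ℝ) (y : ι → ℝ) {w w' : m → ℝ}
    {i : ι} {c r : ℝ} (hc : 0 < c)
    (hw : w ∈ S) (hmin : IsMinOn (fun w ↦ ∑ j, (w ⬝ᵥ x j - y j) ^ 2 / 2) S w)
    (hw' : w' ∈ S)
    (hmin' : IsMinOn (fun w ↦ ∑ j ∈ univ.erase i, (w ⬝ᵥ x j - y j) ^ 2 / 2) S w')
    (hstrong : c * ((w' - w) ⬝ᵥ (w' - w)) ≤ ∑ j, ((w' - w) ⬝ᵥ x j) ^ 2)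
    (hw'x : |w' ⬝ᵥ x i| ≤ r) (hy : |y i| ≤ r) :
    (w' ⬝ᵥ x i - y i) ^ 2 / 2 - (w ⬝ᵥ x i - y i) ^ 2 / 2
      ≤ 4 * r ^ 2 * (x i ⬝ᵥ x i) / c := by
  set a := w' ⬝ᵥ x i - y i
  set t := (w' - w) ⬝ᵥ x i
  have hresid : w ⬝ᵥ x i - y i = a - t := by simp only [a, t, sub_dotProduct]; ring
  have ha : a ^ 2 ≤ 4 * r ^ 2 := by
    rw [show 4 * r ^ 2 = (r + r) ^ 2 by ring]
    exact sq_le_sq' (by linarith [abs_le.mp hw'x, abs_le.mp hy])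
      (by linarith [abs_le.mp hw'x, abs_le.mp hy])
  have hat : a * t ≤ 4 * r ^ 2 * (x i ⬝ᵥ x i) / c :=
    mul_le_div_of_sq_le hc ha (dotProduct_sq_le_dotProduct_self_mul _ _)
      (by simpa using dotProduct_star_self_nonneg (x i))
      (hstrong.trans (sum_sq_dotProduct_sub_le_of_isMinOn x y hS hw hmin hw' hmin'))
  rw [hresid]
  nlinarith [sq_nonneg t]

theorem linear_regression_stability_condition_number_bound_general
    (d n : ℕ) (Y₀ : ℝ)
    (X : Set (Fin d → ℝ))
    (W : Set (Fin d → ℝ)) (hW : W = {w : Fin d → ℝ | ∀ x ∈ X, |w ⬝ᵥ x| ≤ Y₀})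
    -- the sample
    (x : Fin n → Fin d → ℝ) (hx : ∀ i, x i ∈ X)
    (y : Fin n → ℝ) (hy : ∀ i, y i ∈ Set.Icc (-Y₀) Y₀)
    -- the empirical covariance matrix, assumed invertible
    (C : Matrix (Fin d) (Fin d) ℝ)
    (hC : C = (1 / n : ℝ) • ∑ i : Fin n, vecMulVec (x i) (x i))
    (hCinv : IsUnit C)
    -- the empirical risk minimizer
    (what : Fin d → ℝ) (hwhatW : what ∈ W)
    (hwhat : IsMinOn (fun w => (1 / n : ℝ) * ∑ i : Fin n, (w ⬝ᵥ x i - y i) ^ 2 / 2) W what)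
    -- the leave-one-out minimizers
    (whati : Fin n → Fin d → ℝ) (hwhatiW : ∀ i, whati i ∈ W)
    (hwhati : ∀ i, IsMinOn
      (fun w => ∑ j ∈ Finset.univ.erase i, (w ⬝ᵥ x j - y j) ^ 2 / 2) W (whati i)) :
    (1 / n : ℝ) * ∑ i : Fin n,
        ((whati i ⬝ᵥ x i - y i) ^ 2 / 2 - (what ⬝ᵥ x i - y i) ^ 2 / 2)
      ≤ (4 * Y₀ ^ 2 / n) * (C.trace / sInf (spectrum ℝ C)) := by
  rcases n.eq_zero_or_pos with rfl | hn
  · simp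
  rcases isEmpty_or_nonempty (Fin d) with hd | hd
  -- in dimension `0` the spectrum is empty, `sInf ∅ = 0`, and both sides vanish
  · simp [dotProduct]
  have hn' : (0 : ℝ) < n := Nat.cast_pos.mpr hn
  set lam := sInf (spectrum ℝ C)
  have hpsd : C.PosSemidef := hC ▸ posSemidef_smul_sum_vecMulVec (by positivity) x
  have hlam : 0 < n * lam := mul_pos hn' (hpsd.sInf_spectrum_pos_s16 hCinv)
  have hstrong : ∀ u, n * lam * (u ⬝ᵥ u) ≤ ∑ j, (u ⬝ᵥ x j) ^ 2 := fun u ↦ by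
    have hquad : u ⬝ᵥ (C *ᵥ u) = (1 / n : ℝ) * ∑ j, (u ⬝ᵥ x j) ^ 2 := by
      rw [hC, dotProduct_smul_sum_vecMulVec_mulVec]
    have hray := hpsd.1.sInf_spectrum_mul_dotProduct_self_le u
    rw [hquad] at hray
    rw [mul_assoc, ← le_div_iff₀' hn']
    simpa [div_eq_inv_mul] using hray
  have hWconv : Convex ℝ W := hW ▸ convex_setOf_forall_abs_dotProduct_le X Y₀
  have hmin : IsMinOn (fun w ↦ ∑ j, (w ⬝ᵥ x j - y j) ^ 2 / 2) W what := fun v hv ↦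
    le_of_mul_le_mul_left (hwhat hv) (by positivity : (0 : ℝ) < 1 / n)
  have hterm : ∀ i, (whati i ⬝ᵥ x i - y i) ^ 2 / 2 - (what ⬝ᵥ x i - y i) ^ 2 / 2
      ≤ 4 * Y₀ ^ 2 * (x i ⬝ᵥ x i) / (n * lam) := fun i ↦
    leaveOneOut_loss_sub_le hWconv x y hlam hwhatW hmin (hwhatiW i) (hwhati i) (hstrong _)
      ((hW ▸ hwhatiW i) (x i) (hx i)) (abs_le.mpr (hy i))
  calc _ ≤ (1 / n : ℝ) * ∑ i, 4 * Y₀ ^ 2 * (x i ⬝ᵥ x i) / (n * lam) :=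
        mul_le_mul_of_nonneg_left (Finset.sum_le_sum fun i _ ↦ hterm i) (by positivity)
    _ = (4 * Y₀ ^ 2 / n) * (C.trace / lam) := by
        rw [hC, trace_smul_sum_vecMulVec, ← Finset.sum_div, ← Finset.mul_sum]
        field_simp

/-- Linear regression stability bound without preconditioning. Let
`X ⊆ ℝ^d` be compact convex, `W = {w : |wᵀx| ≤ Y₀ for all x ∈ X}`, and
`φ_y(z) = (1/2)(z − y)²`. For every sample `S ∈ (X×[−Y₀,Y₀])^n` whose empirical covariance
`Ĉ = (1/n)·∑ x_i x_iᵀ` is invertible, and any choice of the ERM `ŵ` and leave-one-out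
minimizers `ŵ_1, …, ŵ_n` over `W`, the average stability satisfies
`Δ(S,W) ≤ (4Y₀²/n)·κ(Ĉ)`, where `κ(Ĉ) = tr(Ĉ)/λ_min(Ĉ)` and
`λ_min(Ĉ) = sInf (spectrum ℝ Ĉ)` is the smallest eigenvalue. -/
theorem linear_regression_stability_condition_number_bound
    (d n : ℕ) (Y₀ : ℝ) (hY₀ : 0 < Y₀)
    (X : Set (Fin d → ℝ)) (hXcomp : IsCompact X) (hXconv : Convex ℝ X)
    (W : Set (Fin d → ℝ)) (hW : W = {w : Fin d → ℝ | ∀ x ∈ X, |w ⬝ᵥ x| ≤ Y₀})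
    -- the sample
    (x : Fin n → Fin d → ℝ) (hx : ∀ i, x i ∈ X)
    (y : Fin n → ℝ) (hy : ∀ i, y i ∈ Set.Icc (-Y₀) Y₀)
    -- the empirical covariance matrix, assumed invertible
    (C : Matrix (Fin d) (Fin d) ℝ)
    (hC : C = (1 / n : ℝ) • ∑ i : Fin n, vecMulVec (x i) (x i))
    (hCinv : IsUnit C)
    -- the empirical risk minimizer
    (what : Fin d → ℝ) (hwhatW : what ∈ W)
    (hwhat : IsMinOn (fun w => (1 / n : ℝ) * ∑ i : Fin n, (w ⬝ᵥ x i - y i) ^ 2 / 2) W what)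
    -- the leave-one-out minimizers
    (whati : Fin n → Fin d → ℝ) (hwhatiW : ∀ i, whati i ∈ W)
    (hwhati : ∀ i, IsMinOn
      (fun w => ∑ j ∈ Finset.univ.erase i, (w ⬝ᵥ x j - y j) ^ 2 / 2) W (whati i)) :
    (1 / n : ℝ) * ∑ i : Fin n,
        ((whati i ⬝ᵥ x i - y i) ^ 2 / 2 - (what ⬝ᵥ x i - y i) ^ 2 / 2)
      ≤ (4 * Y₀ ^ 2 / n) * (C.trace / sInf (spectrum ℝ C)) :=
  linear_regression_stability_condition_number_bound_general d n Y₀ X W hW x hx y hy C hC hCinv what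
    hwhatW hwhat whati hwhatiW hwhati
end
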